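/- arXiv:2503.02168 — 12 statements merged into one kernel-verified Lean document; each statement's English description precedes it below -/
import Mathlib

section
/- Let α and β be irrational real numbers. Then the subsets {m + n·α : m, n ∈ ℤ} and {m + n·β : m, n ∈ ℤ} of ℝ are equal if and only if there exist ε ∈ {1, −1} and k ∈ ℤ with α = ε·β + k. -/
/-!
If `ℤ + αℤ = ℤ + βℤ`, write `α = m + nβ` and `β = p + qα`. Substituting gives
`β = (p + qm) + qnβ`, and since `1, β` are linearly independent over `ℤ` for irrational `β`,
`qn = 1`, i.e. `n = ±1`. Conversely, `ℤ + βℤ` is unchanged by `β ↦ β + k` and `β ↦ -β`.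
-/

def intLattice (α : ℝ) : Set ℝ := {x | ∃ m n : ℤ, x = m + n * α}

lemma self_mem_intLattice (α : ℝ) : α ∈ intLattice α :=
  ⟨0, 1, by push_cast; ring⟩

lemma intLattice_add_intCast (β : ℝ) (k : ℤ) : intLattice (β + k) = intLattice β := by
  ext x
  constructor
  · rintro ⟨m, n, rfl⟩
    exact ⟨m + n * k, n, by push_cast; ring⟩
  · rintro ⟨m, n, rfl⟩
    exact ⟨m - n * k, n, by push_cast; ring⟩

lemma intLattice_neg (β : ℝ) : intLattice (-β) = intLattice β := by
  ext x
  constructor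
  · rintro ⟨m, n, rfl⟩
    exact ⟨m, -n, by push_cast; ring⟩
  · rintro ⟨m, n, rfl⟩
    exact ⟨m, -n, by push_cast; ring⟩

lemma Irrational.eq_of_intCast_add_intCast_mul_eq {β : ℝ} (hβ : Irrational β) {a b c d : ℤ}
    (h : a + b * β = c + d * β) : a = c ∧ b = d := by
  have hbd : b = d := by
    by_contra hne
    have hint : ((b - d : ℤ) : ℝ) * β = ((c - a : ℤ) : ℝ) := by push_cast; linarith
    exact (hβ.intCast_mul (sub_ne_zero.mpr hne)).ne_int _ hint
  subst hbd
  exact ⟨by exact_mod_cast add_right_cancel h, rfl⟩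

lemma eq_intCast_add_of_intLattice_eq {α β : ℝ} (hβ : Irrational β)
    (h : intLattice α = intLattice β) : ∃ n : ℤ, (n = 1 ∨ n = -1) ∧ ∃ m : ℤ, α = m + n * β := by
  obtain ⟨m, n, hα⟩ : α ∈ intLattice β := h ▸ self_mem_intLattice α
  obtain ⟨p, q, hβα⟩ : β ∈ intLattice α := h ▸ self_mem_intLattice β
  have hnq : n * q = 1 := by
    rw [mul_comm]
    refine (hβ.eq_of_intCast_add_intCast_mul_eq (a := p + q * m) (c := 0) ?_).2
    rw [hα] at hβα
    push_cast
    linear_combination -hβα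
  exact ⟨n, Int.eq_one_or_neg_one_of_mul_eq_one hnq, m, hα⟩

theorem stmt_0_general (α β : ℝ) (hβ : Irrational β) :
    ({x : ℝ | ∃ m n : ℤ, x = (m : ℝ) + (n : ℝ) * α} =
      {x : ℝ | ∃ m n : ℤ, x = (m : ℝ) + (n : ℝ) * β}) ↔
    ∃ ε : ℝ, (ε = 1 ∨ ε = -1) ∧ ∃ k : ℤ, α = ε * β + (k : ℝ) := by
  change intLattice α = intLattice β ↔ _
  constructor
  · intro h
    obtain ⟨n, hn, m, hα⟩ := eq_intCast_add_of_intLattice_eq hβ h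
    exact ⟨n, by exact_mod_cast hn, m, by rw [hα]; ring⟩
  · rintro ⟨ε, hε | hε, k, rfl⟩ <;> subst hε
    · rw [one_mul, intLattice_add_intCast]
    · rw [neg_one_mul, intLattice_add_intCast, intLattice_neg]

/-- For irrational reals `α`, `β`, the lattices `ℤ + αℤ` and `ℤ + βℤ` coincide
if and only if `α = ±β + k` for some integer `k`. -/
theorem stmt_0 (α β : ℝ) (hα : Irrational α) (hβ : Irrational β) :
    ({x : ℝ | ∃ m n : ℤ, x = (m : ℝ) + (n : ℝ) * α} =
      {x : ℝ | ∃ m n : ℤ, x = (m : ℝ) + (n : ℝ) * β}) ↔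
    ∃ ε : ℝ, (ε = 1 ∨ ε = -1) ∧ ∃ k : ℤ, α = ε * β + (k : ℝ) :=
  stmt_0_general α β hβ
end

section
/- Let 𝒪 be a subring of ℝ and let α, β be real numbers such that {1, α} is linearly independent over 𝒪 and {1, β} is linearly independent over 𝒪. Then the following are equivalent: (i) there exist a, b, c, d ∈ 𝒪 such that a·d − b·c is a unit of 𝒪, c·α + d ≠ 0, and β = (a·α + b)/(c·α + d); (ii) there exists a real number λ ≠ 0 such that {x + y·α : x, y ∈ 𝒪} = {λ·(x + y·β) : x, y ∈ 𝒪} as subsets of ℝ. -/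
/-- For a subring `𝒪 ⊆ ℝ` and reals `α`, `β` with `{1, α}` and `{1, β}` linearly
independent over `𝒪`: `α` and `β` are `PGL₂(𝒪)`-equivalent iff the `𝒪`-lattices
`𝒪 + α𝒪` and `𝒪 + β𝒪` are proportional by some real `λ ≠ 0`. -/
theorem stmt_1 (𝒪 : Subring ℝ) (α β : ℝ)
    (hα : ∀ x y : ℝ, x ∈ 𝒪 → y ∈ 𝒪 → x + y * α = 0 → x = 0 ∧ y = 0)
    (hβ : ∀ x y : ℝ, x ∈ 𝒪 → y ∈ 𝒪 → x + y * β = 0 → x = 0 ∧ y = 0) :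
    (∃ a b c d : ℝ, a ∈ 𝒪 ∧ b ∈ 𝒪 ∧ c ∈ 𝒪 ∧ d ∈ 𝒪 ∧
        (∃ e ∈ 𝒪, (a * d - b * c) * e = 1) ∧
        c * α + d ≠ 0 ∧ β = (a * α + b) / (c * α + d)) ↔
    (∃ lam : ℝ, lam ≠ 0 ∧
      {z : ℝ | ∃ x ∈ 𝒪, ∃ y ∈ 𝒪, z = x + y * α} =
      {z : ℝ | ∃ x ∈ 𝒪, ∃ y ∈ 𝒪, z = lam * (x + y * β)}) := by
  constructor
  · rintro ⟨a, b, c, d, ha, hb, hc, hd, ⟨e, he, hee⟩, hne, hβeq⟩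
    have hcd : (c * α + d) * β = a * α + b := by
      rw [hβeq]; field_simp
    refine ⟨c * α + d, hne, ?_⟩
    ext z
    simp only [Set.mem_setOf_eq]
    constructor
    · rintro ⟨x, hx, y, hy, rfl⟩
      refine ⟨e * (a * x - b * y),
        mul_mem he (sub_mem (mul_mem ha hx) (mul_mem hb hy)),
        e * (d * y - c * x),
        mul_mem he (sub_mem (mul_mem hd hy) (mul_mem hc hx)), ?_⟩
      linear_combination (-(e * (d * y - c * x))) * hcd - (x + y * α) * hee
    · rintro ⟨x, hx, y, hy, rfl⟩
      refine ⟨d * x + b * y, add_mem (mul_mem hd hx) (mul_mem hb hy),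
        c * x + a * y, add_mem (mul_mem hc hx) (mul_mem ha hy), ?_⟩
      linear_combination y * hcd
  · rintro ⟨lam, hlam0, hset⟩
    rw [Set.ext_iff] at hset
    obtain ⟨d', hd', c', hc', hlam⟩ :=
      (hset lam).2 ⟨1, one_mem _, 0, zero_mem _, by ring⟩
    obtain ⟨b', hb', a', ha', hlamβ⟩ :=
      (hset (lam * β)).2 ⟨0, zero_mem _, 1, one_mem _, by ring⟩
    obtain ⟨d, hd, c, hc, h1⟩ :=
      (hset 1).1 ⟨1, one_mem _, 0, zero_mem _, by ring⟩
    obtain ⟨b, hb, a, ha, hα'⟩ :=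
      (hset α).1 ⟨0, zero_mem _, 1, one_mem _, by ring⟩
    obtain ⟨hx1, hy1⟩ := hα (d * d' + c * b' - 1) (d * c' + c * a')
      (sub_mem (add_mem (mul_mem hd hd') (mul_mem hc hb')) (one_mem _))
      (add_mem (mul_mem hd hc') (mul_mem hc ha'))
      (by linear_combination (-d) * hlam - c * hlamβ - h1)
    obtain ⟨hx2, hy2⟩ := hα (b * d' + a * b') (b * c' + a * a' - 1)
      (add_mem (mul_mem hb hd') (mul_mem ha hb'))
      (sub_mem (add_mem (mul_mem hb hc') (mul_mem ha ha')) (one_mem _))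
      (by linear_combination (-b) * hlam - a * hlamβ - hα')
    have hL : c' * α + d' = lam := by linear_combination -hlam
    refine ⟨a', b', c', d', ha', hb', hc', hd',
      ⟨a * d - b * c, sub_mem (mul_mem ha hd) (mul_mem hb hc), ?_⟩, ?_, ?_⟩
    · linear_combination (c * b' + d * d') * hy2 + hx1 - (a * b' + b * d') * hy1
    · rw [hL]; exact hlam0
    · rw [eq_div_iff (by rw [hL]; exact hlam0)]
      linear_combination β * hL + hlamβ
end

section
/- Let α be a real quadratic irrational, and let a, b, c be integers with gcd(a, gcd(b, c)) = 1 and a·α² + b·α + c = 0. Let i, j, k, l be rational numbers with i·l − j·k ≠ 0. Then k·α + l ≠ 0, and (i·α + j)/(k·α + l) = α holds if and only if there exist rationals t and s with i = t − s·b/2, j = −s·c, k = s·a and l = t + s·b/2; moreover in that case i·l − j·k = t² − s²·(b² − 4·a·c)/4. -/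
/-- Stabiliser in `PGL₂(ℚ)` of a real quadratic irrational `α` with primitive
integral quadratic equation `a·α² + b·α + c = 0`: a matrix `(i j; k l) ∈ GL₂(ℚ)`
fixes `α` iff it is of the form `t·Id + s·(-b/2, -c; a, b/2)`, in which case its
determinant equals `t² - s²·Δ/4` where `Δ = b² - 4ac`. -/
theorem stmt_4 (α : ℝ) (hα : Irrational α) (a b c : ℤ)
    (hcop : Int.gcd a (Int.gcd b c) = 1)
    (heq : (a : ℝ) * α ^ 2 + (b : ℝ) * α + (c : ℝ) = 0)
    (i j k l : ℚ) (hdet : i * l - j * k ≠ 0) :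
    ((k : ℝ) * α + (l : ℝ) ≠ 0) ∧
    (((i : ℝ) * α + (j : ℝ)) / ((k : ℝ) * α + (l : ℝ)) = α ↔
      ∃ t s : ℚ, i = t - s * (b : ℚ) / 2 ∧ j = -s * (c : ℚ) ∧
        k = s * (a : ℚ) ∧ l = t + s * (b : ℚ) / 2) ∧
    (∀ t s : ℚ, i = t - s * (b : ℚ) / 2 → j = -s * (c : ℚ) →
      k = s * (a : ℚ) → l = t + s * (b : ℚ) / 2 →
      i * l - j * k = t ^ 2 - s ^ 2 * ((b : ℚ) ^ 2 - 4 * (a : ℚ) * (c : ℚ)) / 4) := by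
  have key : ∀ p q : ℚ, (p : ℝ) * α + (q : ℝ) = 0 → p = 0 ∧ q = 0 := by
    intro p q h
    by_cases hp : p = 0
    · subst hp
      simp at h
      exact ⟨rfl, by exact_mod_cast h⟩
    · exfalso
      apply hα
      refine ⟨-q / p, ?_⟩
      have hp' : (p : ℝ) ≠ 0 := by exact_mod_cast hp
      push_cast
      field_simp
      linarith
  have ha : a ≠ 0 := by
    intro h0
    subst h0
    obtain ⟨hb, hc⟩ := key b c (by push_cast; push_cast at heq; linarith)
    have hb' : b = 0 := by exact_mod_cast hb
    have hc' : c = 0 := by exact_mod_cast hc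
    subst hb'; subst hc'
    simp at hcop
  have haQ : (a : ℚ) ≠ 0 := by exact_mod_cast ha
  have hkl : (k : ℝ) * α + (l : ℝ) ≠ 0 := by
    intro h
    obtain ⟨hk, hl⟩ := key k l h
    apply hdet
    rw [hk, hl]; ring
  refine ⟨hkl, ⟨?_, ?_⟩, ?_⟩
  · intro hdiv
    have h1 : (k : ℝ) * α ^ 2 + ((l : ℝ) - (i : ℝ)) * α - (j : ℝ) = 0 := by
      have := (div_eq_iff hkl).mp hdiv
      linear_combination -this
    obtain ⟨hp, hq⟩ := key ((a : ℚ) * (l - i) - k * b) (-(a : ℚ) * j - k * c)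
      (by push_cast; linear_combination (a : ℝ) * h1 - (k : ℝ) * heq)
    refine ⟨(i + l) / 2, k / (a : ℚ), ?_, ?_, ?_, ?_⟩
    · field_simp
      linarith [hp]
    · field_simp
      linarith [hq]
    · field_simp
    · field_simp
      linarith [hp]
  · rintro ⟨t, s, hi, hj, hk, hl⟩
    subst hi; subst hj; subst hk; subst hl
    rw [div_eq_iff hkl]
    push_cast
    linear_combination (-(s : ℝ)) * heq
  · intro t s hi hj hk hl
    subst hi; subst hj; subst hk; subst hl
    ring
end

section
/- Let α be a non-quadratic irrational real number and β a real number. Suppose there exists m ∈ ℕ such that for every natural number n with n ≥ m and n ≥ 1 there exist integers i, j, k, l with |i·l − j·k| = 1 and (i·(n·α) + j)/(k·(n·α) + l) = n·β. Then there exists an integer k with α = β + k or α = −β + k. -/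
/-- Two irrational reals are `PGL₂(ℤ)`-equivalent when related by an integral
fractional linear transformation of determinant `±1`. -/
def PGL2ZEquiv (x y : ℝ) : Prop :=
  ∃ i j k l : ℤ, |i * l - j * k| = 1 ∧
    ((i : ℝ) * x + (j : ℝ)) / ((k : ℝ) * x + (l : ℝ)) = y

/-!
Write `nβ = gₙ(nα)` with `gₙ = (iₙ, jₙ, kₙ, lₙ) ∈ GL₂(ℤ)`. Conjugating by `diag(n, 1)`, every
`Mₙ = [[n iₙ, jₙ], [n² kₙ, n lₙ]]` sends `α` to `β`. Since `α` is not quadratic, two integer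
matrices taking the same value at `α` are proportional, so comparing determinants (`±n²`) and
lower-left entries of `Mₙ` and `M_N` gives `n |kₙ| = N |k_N|` for all `n ≥ N`. Then every
`n ≥ N` divides `N |k_N|`, forcing `kₙ = 0`, so `nβ = ±nα + cₙ`; the integer relation between
`M_N` and `M_{N+1}` shows that `β ∓ α = c_N / N = c_{N+1} / (N + 1)` equals `c_{N+1} - c_N`.
-/

theorem int_coeffs_eq_zero_of_linearIndependent {α : ℝ}
    (hα : LinearIndependent ℚ ![(1 : ℝ), α, α ^ 2]) {a b c : ℤ}
    (h : (a : ℝ) + b * α + c * α ^ 2 = 0) : a = 0 ∧ b = 0 ∧ c = 0 := by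
  have := Fintype.linearIndependent_iff.mp hα ![(a : ℚ), b, c] (by
    simpa [Fin.sum_univ_three, Rat.smul_def] using h)
  exact ⟨by simpa using this 0, by simpa using this 1, by simpa using this 2⟩

theorem mobius_relations_of_apply_eq {α β : ℝ}
    (hα : LinearIndependent ℚ ![(1 : ℝ), α, α ^ 2]) {p q r s p' q' r' s' : ℤ}
    (h : β * (r * α + s) = p * α + q) (h' : β * (r' * α + s') = p' * α + q') :
    p * r' = r * p' ∧ p * s' + q * r' = r * q' + s * p' ∧ q * s' = s * q' := by
  have hcross : ((p : ℝ) * α + q) * (r' * α + s') = (p' * α + q') * (r * α + s) := by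
    rw [← h, ← h']; ring
  obtain ⟨h₀, h₁, h₂⟩ := int_coeffs_eq_zero_of_linearIndependent hα
    (a := q * s' - s * q') (b := p * s' + q * r' - r * q' - s * p') (c := p * r' - r * p')
    (by push_cast; linear_combination hcross)
  exact ⟨by linarith, by linarith, by linarith⟩

/-- For proportional matrices `M' = λ M` both sides equal `λ² det M · r²`. -/
theorem det_mul_sq_eq_of_mobius_relations {R : Type*} [CommRing R] {p q r s p' q' r' s' : R}
    (h₁ : p * r' = r * p') (h₂ : p * s' + q * r' = r * q' + s * p') :
    (p * s - q * r) * r' ^ 2 = (p' * s' - q' * r') * r ^ 2 := by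
  linear_combination (r' * s + r * s') * h₁ - r * r' * h₂

theorem PGL2ZEquiv.exists_mul_eq {x y : ℝ} (hx : Irrational x) (h : PGL2ZEquiv x y) :
    ∃ i j k l : ℤ, |i * l - j * k| = 1 ∧ y * (k * x + l) = i * x + j := by
  obtain ⟨i, j, k, l, hdet, hxy⟩ := h
  refine ⟨i, j, k, l, hdet, ?_⟩
  have hden : (k : ℝ) * x + l ≠ 0 := by
    intro h0
    rcases eq_or_ne k 0 with rfl | hk
    · have hl : l = 0 := by exact_mod_cast (by simpa using h0 : (l : ℝ) = 0)
      simp [hl] at hdet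
    · exact (hx.intCast_mul hk).ne_int (-l) (by push_cast; linarith)
  rw [← hxy, div_mul_cancel₀ _ hden]

theorem PGL2ZEquiv.exists_rescaled {α β : ℝ} (hα : Irrational α) {n : ℕ} (hn : n ≠ 0)
    (h : PGL2ZEquiv (n * α) (n * β)) :
    ∃ i j k l : ℤ, |i * l - j * k| = 1 ∧
      β * (((n : ℤ) ^ 2 * k : ℤ) * α + ((n : ℤ) * l : ℤ)) = ((n : ℤ) * i : ℤ) * α + j := by
  obtain ⟨i, j, k, l, hdet, h⟩ := h.exists_mul_eq (hα.natCast_mul hn)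
  exact ⟨i, j, k, l, hdet, by push_cast; linear_combination h⟩

theorem mul_natAbs_eq_of_rescaled {α β : ℝ} (hα : LinearIndependent ℚ ![(1 : ℝ), α, α ^ 2])
    {n N : ℕ} (hn : n ≠ 0) (hN : N ≠ 0) {i j k l i' j' k' l' : ℤ}
    (hdet : |i * l - j * k| = 1) (hdet' : |i' * l' - j' * k'| = 1)
    (h : β * (((n : ℤ) ^ 2 * k : ℤ) * α + ((n : ℤ) * l : ℤ)) = ((n : ℤ) * i : ℤ) * α + j)
    (h' : β * (((N : ℤ) ^ 2 * k' : ℤ) * α + ((N : ℤ) * l' : ℤ)) = ((N : ℤ) * i' : ℤ) * α + j') :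
    n * k.natAbs = N * k'.natAbs := by
  obtain ⟨h₁, h₂, -⟩ := mobius_relations_of_apply_eq hα h h'
  have hdet_sq := det_mul_sq_eq_of_mobius_relations h₁ h₂
  have hscaled : ((n : ℤ) ^ 2 * N ^ 2) *
      ((i * l - j * k) * (N * k') ^ 2 - (i' * l' - j' * k') * (n * k) ^ 2) = 0 := by
    linear_combination hdet_sq
  have hsq : (i * l - j * k) * (N * k') ^ 2 = (i' * l' - j' * k') * (n * k) ^ 2 :=
    sub_eq_zero.mp ((mul_eq_zero.mp hscaled).resolve_left (by positivity))
  have habs := congrArg abs hsq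
  simp only [abs_mul, abs_sq, hdet, hdet', one_mul] at habs
  have := Int.natAbs_eq_iff_sq_eq.mpr habs.symm
  simpa only [Int.natAbs_mul, Int.natAbs_natCast] using this

theorem exists_int_of_rescaled_of_eq_zero {α β : ℝ}
    (hα : LinearIndependent ℚ ![(1 : ℝ), α, α ^ 2]) {N : ℕ} (hN : N ≠ 0)
    {i j k l i' j' k' l' : ℤ} (hdet : |i * l - j * k| = 1) (hdet' : |i' * l' - j' * k'| = 1)
    (h : β * (((N : ℤ) ^ 2 * k : ℤ) * α + ((N : ℤ) * l : ℤ)) = ((N : ℤ) * i : ℤ) * α + j)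
    (h' : β * ((((N + 1 : ℕ) : ℤ) ^ 2 * k' : ℤ) * α + (((N + 1 : ℕ) : ℤ) * l' : ℤ)) =
      (((N + 1 : ℕ) : ℤ) * i' : ℤ) * α + j')
    (hk : k = 0) (hk' : k' = 0) :
    ∃ c : ℤ, α = β + c ∨ α = -β + c := by
  subst hk hk'
  obtain ⟨-, -, hq⟩ := mobius_relations_of_apply_eq hα h h'
  simp only [mul_zero, sub_zero] at hdet hdet'
  have hl : l ^ 2 = 1 := Int.eq_one_of_mul_eq_one_left (sq_nonneg l) (by
    rw [← mul_pow, ← sq_abs, hdet, one_pow])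
  have hl' : l' ^ 2 = 1 := Int.eq_one_of_mul_eq_one_left (sq_nonneg l') (by
    rw [← mul_pow, ← sq_abs, hdet', one_pow])
  have hc : j * l = N * (j' * l' - j * l) := by
    push_cast at hq
    linear_combination l * l' * hq - j * l * (N + 1) * hl' + N * j' * l' * hl
  have hβ : β = (i * l : ℤ) * α + (j' * l' - j * l : ℤ) := by
    have hlR : (l : ℝ) ^ 2 = 1 := by exact_mod_cast hl
    have hcR : (j : ℝ) * l = N * (j' * l' - j * l) := by exact_mod_cast hc
    apply mul_left_cancel₀ (Nat.cast_ne_zero.mpr hN : (N : ℝ) ≠ 0)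
    push_cast at h ⊢
    linear_combination l * h - N * β * hlR + hcR
  rcases (abs_eq zero_le_one).mp hdet with hε | hε <;> rw [hε] at hβ <;> push_cast at hβ
  · exact ⟨j * l - j' * l', Or.inl (by push_cast; linarith)⟩
  · exact ⟨j' * l' - j * l, Or.inr (by push_cast; linarith)⟩

/-- If a non-quadratic irrational `α` and a real `β` are eventually
`PGL₂(ℤ)`-equivalent, then `α = ±β + k` for some integer `k`. -/
theorem stmt_5 (α β : ℝ) (hα : Irrational α)
    (hnq : LinearIndependent ℚ ![(1 : ℝ), α, α ^ 2])
    (hev : ∃ m : ℕ, ∀ n : ℕ, m ≤ n → 1 ≤ n →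
      PGL2ZEquiv ((n : ℝ) * α) ((n : ℝ) * β)) :
    ∃ k : ℤ, α = β + (k : ℝ) ∨ α = -β + (k : ℝ) := by
  obtain ⟨m, hm⟩ := hev
  obtain ⟨N, hmN, hN⟩ : ∃ N, m ≤ N ∧ N ≠ 0 := ⟨m + 1, by omega, by omega⟩
  have hres (n : ℕ) (hn : N ≤ n) := (hm n (by omega) (by omega)).exists_rescaled hα (by omega)
  obtain ⟨i, j, k, l, hdet, h⟩ := hres N le_rfl
  have hk : k = 0 := by
    obtain ⟨i', j', k', l', hdet', h'⟩ := hres (N * k.natAbs + N) (Nat.le_add_left _ _)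
    have hrel := mul_natAbs_eq_of_rescaled hnq (by omega) hN hdet' hdet h' h
    have : N * k.natAbs = 0 := Nat.eq_zero_of_dvd_of_lt (Dvd.intro _ hrel)
      (Nat.lt_add_of_pos_right (Nat.pos_of_ne_zero hN))
    simpa [hN] using this
  obtain ⟨i', j', k', l', hdet', h'⟩ := hres (N + 1) (Nat.le_succ N)
  have hk' : k' = 0 := by
    simpa [hk] using mul_natAbs_eq_of_rescaled hnq (Nat.succ_ne_zero N) hN hdet' hdet h' h
  exact exists_int_of_rescaled_of_eq_zero hnq hN hdet hdet' h h' hk hk'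
end

section
/- Let α be a real quadratic irrational and β an irrational real number. Suppose there exists m ∈ ℕ such that for every natural number n with n ≥ m and n ≥ 1 there exist integers i, j, k, l with |i·l − j·k| = 1 and (i·(n·α) + j)/(k·(n·α) + l) = n·β. Then for every natural number n ≥ 1 there exist integers i, j, k, l with |i·l − j·k| = 1 and (i·(n·α) + j)/(k·(n·α) + l) = n·β; that is, n·α and n·β are PGL₂(ℤ)-equivalent for all n ≥ 1. -/
open Pointwise Submodule

theorem Irrational.ratCast_mul_add_eq_zero_iff {x : ℝ} (hx : Irrational x) {a b : ℚ} :
    (a : ℝ) * x + b = 0 ↔ a = 0 ∧ b = 0 := by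
  refine ⟨fun h ↦ ?_, fun ⟨ha, hb⟩ ↦ by simp [ha, hb]⟩
  have ha : a = 0 := by
    by_contra ha
    exact ((hx.ratCast_mul ha).add_ratCast b).ne_zero h
  subst ha
  exact ⟨rfl, by exact_mod_cast (by simpa using h : (b : ℝ) = 0)⟩

theorem Irrational.intCast_mul_add_eq_zero_iff {x : ℝ} (hx : Irrational x) {a b : ℤ} :
    (a : ℝ) * x + b = 0 ↔ a = 0 ∧ b = 0 := by
  have := hx.ratCast_mul_add_eq_zero_iff (a := a) (b := b)
  push_cast at this
  exact_mod_cast this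

theorem Irrational.denom_ne_zero_of_abs_det_eq_one {x : ℝ} (hx : Irrational x) {i j k l : ℤ}
    (hdet : |i * l - j * k| = 1) : (k : ℝ) * x + l ≠ 0 := by
  intro h
  obtain ⟨rfl, rfl⟩ := hx.intCast_mul_add_eq_zero_iff.mp h
  simp at hdet

def IsAtMostQuadratic (x : ℝ) : Prop :=
  ∃ p q : ℚ, x ^ 2 = p * x + q

theorem isAtMostQuadratic_of_irrational {x : ℝ} (hx : Irrational x) {a b c : ℚ}
    (habc : ¬(a = 0 ∧ b = 0 ∧ c = 0)) (h : (a : ℝ) * x ^ 2 + b * x + c = 0) :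
    IsAtMostQuadratic x := by
  have ha : a ≠ 0 := by
    rintro rfl
    exact habc ⟨rfl, hx.ratCast_mul_add_eq_zero_iff.mp (by simpa using h)⟩
  refine ⟨-b / a, -c / a, ?_⟩
  push_cast
  field_simp
  linear_combination h

theorem IsAtMostQuadratic.affine {x : ℝ} (hx : IsAtMostQuadratic x) (a b : ℚ) :
    IsAtMostQuadratic (a * x + b) := by
  obtain ⟨p, q, hpq⟩ := hx
  refine ⟨a * p + 2 * b, a ^ 2 * q - a * b * p - b ^ 2, ?_⟩
  push_cast
  linear_combination (a : ℝ) ^ 2 * hpq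

/-- Division by `k x + l` is multiplication by its conjugate `k (p - x) + l`
divided by the rational norm. -/
theorem IsAtMostQuadratic.exists_eq_affine_of_pgl2ZEquiv {x y : ℝ} (hx : Irrational x)
    (hxq : IsAtMostQuadratic x) (hxy : PGL2ZEquiv x y) : ∃ a b : ℚ, y = a * x + b := by
  obtain ⟨p, q, hpq⟩ := hxq
  obtain ⟨i, j, k, l, hdet, rfl⟩ := hxy
  have hden := hx.denom_ne_zero_of_abs_det_eq_one hdet
  have hconj : (k : ℝ) * (p - x) + l ≠ 0 := by
    intro h
    have := hx.ratCast_mul_add_eq_zero_iff (a := -k) (b := k * p + l)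
    push_cast at this
    obtain ⟨hk, hl⟩ := this.mp (by linear_combination h)
    have hk : k = 0 := by exact_mod_cast neg_eq_zero.mp hk
    subst hk
    exact hden (by simpa using hl)
  set N : ℚ := l ^ 2 + k * l * p - k ^ 2 * q
  have hN : (N : ℝ) = (k * x + l) * (k * (p - x) + l) := by
    simp only [N]; push_cast; linear_combination (k : ℝ) ^ 2 * hpq
  have hN0 : (N : ℝ) ≠ 0 := hN ▸ mul_ne_zero hden hconj
  refine ⟨(i * l - j * k) / N, (j * k * p + j * l - i * k * q) / N, ?_⟩
  rw [div_eq_iff hden]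
  push_cast
  field_simp
  rw [hN]
  linear_combination (-(i : ℝ) * k * (k * x + l)) * hpq

theorem IsAtMostQuadratic.exists_int_mul_sq {x : ℝ} (hx : IsAtMostQuadratic x) :
    ∃ D : ℕ, D ≠ 0 ∧ ∃ P Q : ℤ, (D : ℝ) * x ^ 2 = P * x + Q := by
  obtain ⟨p, q, hpq⟩ := hx
  refine ⟨p.den * q.den, by positivity, p.num * q.den, q.num * p.den, ?_⟩
  have hp : (p.num : ℝ) = p * p.den := by exact_mod_cast (Rat.mul_den_eq_num p).symm
  have hq : (q.num : ℝ) = q * q.den := by exact_mod_cast (Rat.mul_den_eq_num q).symm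
  push_cast
  rw [hpq, hp, hq]
  ring

abbrev lattice (x : ℝ) : Submodule ℤ ℝ := span ℤ {1, x}

theorem mem_lattice_iff {x z : ℝ} : z ∈ lattice x ↔ ∃ a b : ℤ, z = a * x + b := by
  simp only [mem_span_pair, zsmul_eq_mul, mul_one]
  exact ⟨fun ⟨b, a, h⟩ ↦ ⟨a, b, by rw [← h, add_comm]⟩, fun ⟨a, b, h⟩ ↦ ⟨b, a, by rw [h, add_comm]⟩⟩

theorem IsAtMostQuadratic.exists_forall_dvd_mul_sq_mem_lattice {x : ℝ}
    (hx : IsAtMostQuadratic x) :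
    ∃ D : ℕ, D ≠ 0 ∧ ∀ N n : ℕ, D ∣ N → (N : ℝ) * (n * x) ^ 2 ∈ lattice (n * x) := by
  obtain ⟨D, hD, P, Q, hPQ⟩ := hx.exists_int_mul_sq
  refine ⟨D, hD, fun N n ⟨e, he⟩ ↦ mem_lattice_iff.mpr ⟨e * P * n, e * n ^ 2 * Q, ?_⟩⟩
  rw [he]
  push_cast
  linear_combination ((e : ℝ) * n ^ 2) * hPQ

theorem PGL2ZEquiv.exists_smul_lattice_eq {x y : ℝ} (hx : Irrational x)
    (hxy : PGL2ZEquiv x y) : ∃ c : ℝ, c ≠ 0 ∧ c • lattice y = lattice x := by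
  obtain ⟨i, j, k, l, hdet, rfl⟩ := hxy
  have hden := hx.denom_ne_zero_of_abs_det_eq_one hdet
  have hδ : ((i : ℝ) * l - j * k) ^ 2 = 1 := by
    exact_mod_cast (sq_abs (i * l - j * k)).symm.trans (by rw [hdet, one_pow])
  refine ⟨k * x + l, hden, ?_⟩
  rw [← span_smul, Set.smul_set_insert, Set.smul_set_singleton, smul_eq_mul, smul_eq_mul,
    mul_one, mul_div_cancel₀ _ hden]
  apply le_antisymm
  · rw [span_le, Set.insert_subset_iff, Set.singleton_subset_iff]
    exact ⟨mem_lattice_iff.mpr ⟨k, l, rfl⟩, mem_lattice_iff.mpr ⟨i, j, rfl⟩⟩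
  · rw [span_le, Set.insert_subset_iff, Set.singleton_subset_iff]
    constructor
    · refine mem_span_pair.mpr ⟨(i * l - j * k) * i, -((i * l - j * k) * k), ?_⟩
      simp only [zsmul_eq_mul]; push_cast
      linear_combination hδ
    · refine mem_span_pair.mpr ⟨-((i * l - j * k) * j), (i * l - j * k) * l, ?_⟩
      simp only [zsmul_eq_mul]; push_cast
      linear_combination x * hδ

theorem PGL2ZEquiv.of_smul_lattice_eq {x y c : ℝ} (hx : Irrational x) (hc0 : c ≠ 0)
    (h : c • lattice y = lattice x) : PGL2ZEquiv x y := by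
  have mem_smul (z : ℝ) (hz : z ∈ lattice y) : c * z ∈ lattice x :=
    h ▸ smul_mem_pointwise_smul z c _ hz
  obtain ⟨k, l, hc⟩ := mem_lattice_iff.mp (by simpa using mem_smul 1 (subset_span (by simp)))
  obtain ⟨i, j, hcy⟩ := mem_lattice_iff.mp (mem_smul y (subset_span (by simp)))
  have mem_span_c (z : ℝ) (hz : z ∈ lattice x) : ∃ a b : ℤ, z = a * c + b * (c * y) := by
    rw [← h, ← span_smul, Set.smul_set_insert, Set.smul_set_singleton, smul_eq_mul,
      smul_eq_mul, mul_one] at hz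
    obtain ⟨a, b, hab⟩ := mem_span_pair.mp hz
    exact ⟨a, b, by simp [← hab]⟩
  obtain ⟨a, b, h1⟩ := mem_span_c 1 (subset_span (by simp))
  obtain ⟨e, f, hx1⟩ := mem_span_c x (subset_span (by simp))
  rw [hcy, hc] at h1 hx1
  obtain ⟨h11, h12⟩ := hx.intCast_mul_add_eq_zero_iff (a := a * k + b * i) (b := a * l + b * j - 1)
    |>.mp (by push_cast; linear_combination -h1)
  obtain ⟨h21, -⟩ := hx.intCast_mul_add_eq_zero_iff (a := e * k + f * i - 1) (b := e * l + f * j)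
    |>.mp (by push_cast; linear_combination -hx1)
  have hdet : (a * f - b * e) * (i * l - j * k) = 1 := by
    linear_combination (e * k + f * i) * h12 + h21 - (e * l + f * j) * h11
  refine ⟨i, j, k, l, ?_, ?_⟩
  · exact Int.isUnit_iff_abs_eq.mp (IsUnit.of_mul_eq_one_right _ hdet)
  · rw [← hc, ← hcy, mul_div_cancel_left₀ y hc0]

theorem lattice_mul_lattice {x : ℝ} {s t : ℤ} (hst : IsCoprime s t)
    (hx : (s * t : ℝ) * x ^ 2 ∈ lattice x) : lattice (s * x) * lattice (t * x) = lattice x := by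
  rw [span_mul_span]
  apply le_antisymm
  · rw [span_le, Set.mul_subset_iff]
    rintro a (rfl | rfl) b (rfl | rfl)
    · exact subset_span (by simp)
    · exact mem_lattice_iff.mpr ⟨t, 0, by ring⟩
    · exact mem_lattice_iff.mpr ⟨s, 0, by ring⟩
    · rw [SetLike.mem_coe]
      convert hx using 1
      ring
  · obtain ⟨u, v, huv⟩ := hst
    rw [span_le, Set.insert_subset_iff, Set.singleton_subset_iff]
    refine ⟨subset_span ⟨1, by simp, 1, by simp, one_mul 1⟩, ?_⟩
    have hsx : s * x ∈ span ℤ ({1, s * x} * {1, t * x}) :=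
      subset_span ⟨s * x, by simp, 1, by simp, mul_one _⟩
    have htx : t * x ∈ span ℤ ({1, s * x} * {1, t * x}) :=
      subset_span ⟨1, by simp, t * x, by simp, one_mul _⟩
    have huv' : (u * s + v * t : ℝ) = 1 := by exact_mod_cast huv
    rw [SetLike.mem_coe]
    convert add_mem (zsmul_mem hsx u) (zsmul_mem htx v) using 1
    simp only [zsmul_eq_mul]
    linear_combination (-x) * huv'

theorem PGL2ZEquiv.of_coprime {x y : ℝ} (hx : Irrational x) {s t : ℕ} (hs : s ≠ 0) (ht : t ≠ 0)
    (hst : s.Coprime t) (hxsq : (s * t : ℝ) * x ^ 2 ∈ lattice x)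
    (hysq : (s * t : ℝ) * y ^ 2 ∈ lattice y)
    (hsxy : PGL2ZEquiv (s * x) (s * y)) (htxy : PGL2ZEquiv (t * x) (t * y)) :
    PGL2ZEquiv x y := by
  have hst' : IsCoprime (s : ℤ) t := Nat.isCoprime_iff_coprime.mpr hst
  obtain ⟨c, hc, hcs⟩ := hsxy.exists_smul_lattice_eq (hx.natCast_mul hs)
  obtain ⟨d, hd, hdt⟩ := htxy.exists_smul_lattice_eq (hx.natCast_mul ht)
  refine .of_smul_lattice_eq hx (mul_ne_zero hc hd) ?_
  have hlx := lattice_mul_lattice (x := x) hst' (by exact_mod_cast hxsq)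
  have hly := lattice_mul_lattice (x := y) hst' (by exact_mod_cast hysq)
  simp only [Int.cast_natCast] at hlx hly
  rw [← hlx, ← hly, ← smul_mul_smul, hcs, hdt]

theorem stmt_6_general (α β : ℝ) (hα : Irrational α)
    (hquad : ∃ a b c : ℚ, ¬(a = 0 ∧ b = 0 ∧ c = 0) ∧
      (a : ℝ) * α ^ 2 + (b : ℝ) * α + (c : ℝ) = 0)
    (hev : ∃ m : ℕ, ∀ n : ℕ, m ≤ n → 1 ≤ n →
      PGL2ZEquiv ((n : ℝ) * α) ((n : ℝ) * β)) :
    ∀ n : ℕ, 1 ≤ n → PGL2ZEquiv ((n : ℝ) * α) ((n : ℝ) * β) := by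
  obtain ⟨m, hm⟩ := hev
  obtain ⟨a, b, c, habc, hα2⟩ := hquad
  have hαq : IsAtMostQuadratic α := isAtMostQuadratic_of_irrational hα habc hα2
  have hβq : IsAtMostQuadratic β := by
    obtain ⟨u, v, huv⟩ := (hαq.affine (m + 1) 0).exists_eq_affine_of_pgl2ZEquiv
      (by simpa using hα.natCast_mul m.succ_ne_zero) (by simpa using hm (m + 1) (by omega) (by omega))
    have hβα : β = u * α + (v / (m + 1) : ℚ) := by
      push_cast at huv ⊢
      field_simp
      linear_combination huv
    exact hβα ▸ hαq.affine u _
  obtain ⟨Dα, hDα, hαD⟩ := hαq.exists_forall_dvd_mul_sq_mem_lattice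
  obtain ⟨Dβ, hDβ, hβD⟩ := hβq.exists_forall_dvd_mul_sq_mem_lattice
  intro n hn
  set s := Dα * Dβ * (m + 1)
  have hms : m < s :=
    m.lt_succ_self.trans_le (Nat.le_mul_of_pos_left _ (Nat.pos_of_ne_zero (mul_ne_zero hDα hDβ)))
  have hscaled {r : ℕ} (hr : m < r) : PGL2ZEquiv (r * (n * α)) (r * (n * β)) := by
    simpa only [Nat.cast_mul, mul_assoc] using hm (r * n) (by nlinarith) (by nlinarith)
  refine .of_coprime (hα.natCast_mul (by omega)) (s := s) (t := s + 1) (by omega) (by omega)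
    (by simp) ?_ ?_ (hscaled hms) (hscaled (by omega))
  · exact_mod_cast hαD (s * (s + 1)) n (Dvd.intro (Dβ * (m + 1) * (s + 1)) (by ring))
  · exact_mod_cast hβD (s * (s + 1)) n (Dvd.intro (Dα * (m + 1) * (s + 1)) (by ring))

/-- If a quadratic irrational `α` and an irrational `β` are eventually
`PGL₂(ℤ)`-equivalent, then `n·α` and `n·β` are `PGL₂(ℤ)`-equivalent for all
`n ≥ 1`. -/
theorem stmt_6 (α β : ℝ) (hα : Irrational α)
    (hquad : ∃ a b c : ℚ, ¬(a = 0 ∧ b = 0 ∧ c = 0) ∧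
      (a : ℝ) * α ^ 2 + (b : ℝ) * α + (c : ℝ) = 0)
    (hβ : Irrational β)
    (hev : ∃ m : ℕ, ∀ n : ℕ, m ≤ n → 1 ≤ n →
      PGL2ZEquiv ((n : ℝ) * α) ((n : ℝ) * β)) :
    ∀ n : ℕ, 1 ≤ n → PGL2ZEquiv ((n : ℝ) * α) ((n : ℝ) * β) :=
  stmt_6_general α β hα hquad hev
end

section
/- Let α and β be real numbers with β irrational. Suppose there exists m ∈ ℕ such that for every natural number n ≥ m there exist ε ∈ {1, −1} and an integer k with n·α = ε·(n·β) + k. Then there exist ε ∈ {1, −1} and an integer k with α = ε·β + k. -/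
/-!
If `n α - ε_n n β` is an integer for three consecutive `n`, two neighbouring signs agree
(and subtracting those two relations gives `α - ε β ∈ ℤ`) unless the signs alternate. In the
alternating case the second difference of the three relations kills `α` and leaves
`4 (n + 1) β ∈ ℤ`, impossible for irrational `β`.
-/

lemma eq_mul_add_intCast_of_consecutive {α β ε x : ℝ} {k k' : ℤ}
    (h : x * α = ε * (x * β) + k) (h' : (x + 1) * α = ε * ((x + 1) * β) + k') :
    α = ε * β + ((k' - k : ℤ) : ℝ) := by
  push_cast
  linear_combination h' - h

lemma four_mul_eq_of_alternating {α β ε x : ℝ} {k₀ k₁ k₂ : ℤ}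
    (h₀ : x * α = -ε * (x * β) + k₀)
    (h₁ : (x + 1) * α = ε * ((x + 1) * β) + k₁)
    (h₂ : (x + 2) * α = -ε * ((x + 2) * β) + k₂) :
    4 * (x + 1) * ε * β = k₀ + k₂ - 2 * k₁ := by
  linear_combination h₀ + h₂ - 2 * h₁

lemma Irrational.false_of_alternating_signs {α β ε : ℝ} (hβ : Irrational β) (hε : ε = 1 ∨ ε = -1)
    {n : ℕ} {k₀ k₁ k₂ : ℤ}
    (h₀ : n * α = -ε * (n * β) + k₀)
    (h₁ : (n + 1) * α = ε * ((n + 1) * β) + k₁)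
    (h₂ : (n + 2) * α = -ε * ((n + 2) * β) + k₂) : False := by
  have key := four_mul_eq_of_alternating h₀ h₁ h₂
  have hirr : Irrational (((4 * (n + 1) : ℕ) : ℝ) * β) := hβ.natCast_mul (by positivity)
  rcases hε with rfl | rfl
  · exact hirr.ne_int (k₀ + k₂ - 2 * k₁) (by push_cast; linarith)
  · exact hirr.ne_int (2 * k₁ - k₀ - k₂) (by push_cast; linarith)

lemma eq_neg_of_ne_of_sign {ε δ : ℝ} (hε : ε = 1 ∨ ε = -1) (hδ : δ = 1 ∨ δ = -1)
    (hne : ε ≠ δ) : ε = -δ := by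
  rcases hε with rfl | rfl <;> rcases hδ with rfl | rfl <;> norm_num at *

/-- If `n·α = ±(n·β) + k_n` (with `k_n ∈ ℤ`) for all sufficiently large `n`, and
`β` is irrational, then `α = ±β + k` for some integer `k`. -/
theorem stmt_9 (α β : ℝ) (hβ : Irrational β)
    (hev : ∃ m : ℕ, ∀ n : ℕ, m ≤ n →
      ∃ ε : ℝ, (ε = 1 ∨ ε = -1) ∧ ∃ k : ℤ, (n : ℝ) * α = ε * ((n : ℝ) * β) + (k : ℝ)) :
    ∃ ε : ℝ, (ε = 1 ∨ ε = -1) ∧ ∃ k : ℤ, α = ε * β + (k : ℝ) := by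
  obtain ⟨m, h⟩ := hev
  obtain ⟨ε₀, hε₀, k₀, e₀⟩ := h m le_rfl
  obtain ⟨ε₁, hε₁, k₁, e₁⟩ := h (m + 1) (by omega)
  obtain ⟨ε₂, hε₂, k₂, e₂⟩ := h (m + 2) (by omega)
  push_cast at e₁ e₂
  by_cases h₀₁ : ε₀ = ε₁
  · subst h₀₁
    exact ⟨ε₀, hε₀, _, eq_mul_add_intCast_of_consecutive e₀ e₁⟩
  by_cases h₁₂ : ε₁ = ε₂
  · subst h₁₂
    rw [← one_add_one_eq_two, ← add_assoc] at e₂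
    exact ⟨ε₁, hε₁, _, eq_mul_add_intCast_of_consecutive e₁ e₂⟩
  rw [eq_neg_of_ne_of_sign hε₀ hε₁ h₀₁] at e₀
  rw [eq_neg_of_ne_of_sign hε₂ hε₁ (Ne.symm h₁₂)] at e₂
  exact (hβ.false_of_alternating_signs hε₁ e₀ e₁ e₂).elim
end

section
/- Let α be a non-quadratic irrational real number, let β = (2·α + 1)/(α + 1), and let n be a natural number with n ≥ 2. Then there do NOT exist integers i, j, k, l with |i·l − j·k| = 1 and (i·(α/n) + j)/(k·(α/n) + l) = β/n; that is, α/n and β/n are not PGL₂(ℤ)-equivalent (although α and β themselves are PGL₂(ℤ)-equivalent). -/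
theorem LinearIndependent.eq_zero_of_int_quadratic_eq_zero {K : Type*} [Field K] [CharZero K]
    {x : K} (hx : LinearIndependent ℚ ![1, x, x ^ 2]) {a b c : ℤ} (h : a + b * x + c * x ^ 2 = 0) :
    a = 0 ∧ b = 0 ∧ c = 0 := by
  have := Fintype.linearIndependent_iff.mp hx ![(a : ℚ), b, c]
    (by simpa [Fin.sum_univ_three, Rat.smul_def] using h)
  exact ⟨by simpa using this 0, by simpa using this 1, by simpa using this 2⟩

theorem Irrational.intCast_mul_add_intCast_ne_zero {x : ℝ} (hx : Irrational x) {k l : ℤ}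
    (hkl : k ≠ 0 ∨ l ≠ 0) : k * x + l ≠ 0 := by
  rcases eq_or_ne k 0 with rfl | hk
  · simpa using hkl
  · exact ((hx.intCast_mul hk).add_intCast l).ne_zero

theorem pgl2ZEquiv_two_mul_add_one_div_add_one (x : ℝ) :
    PGL2ZEquiv x ((2 * x + 1) / (x + 1)) :=
  ⟨2, 1, 1, 1, by norm_num, by push_cast; ring_nf⟩

theorem eq_one_of_pgl2ZEquiv_div_natCast {α : ℝ} (hα : Irrational α)
    (hnq : LinearIndependent ℚ ![1, α, α ^ 2]) {n : ℕ} (hn : n ≠ 0)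
    (h : PGL2ZEquiv (α / n) ((2 * α + 1) / (α + 1) / n)) : n = 1 := by
  obtain ⟨i, j, k, l, hdet, heq⟩ := h
  have hkl : k ≠ 0 ∨ l ≠ 0 := by
    by_contra! h0
    simp [h0.1, h0.2] at hdet
  have hden := (hα.div_natCast hn).intCast_mul_add_intCast_ne_zero hkl
  have hα1 : α + 1 ≠ 0 := fun h ↦ hα.ne_int (-1) (by push_cast; linarith)
  rw [div_eq_iff hden] at heq
  field_simp at heq
  have hquad : ((n ^ 2 * j - n * l : ℤ) : ℝ) + ((n * i + n ^ 2 * j - k - 2 * n * l : ℤ) : ℝ) * α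
      + ((n * i - 2 * k : ℤ) : ℝ) * α ^ 2 = 0 := by
    push_cast
    linear_combination heq
  obtain ⟨h0, h1, -⟩ := hnq.eq_zero_of_int_quadratic_eq_zero hquad
  have hnZ : (n : ℤ) ≠ 0 := by exact_mod_cast hn
  have hl : (n : ℤ) ∣ l := ⟨j, mul_left_cancel₀ hnZ (by linear_combination -h0)⟩
  have hk : (n : ℤ) ∣ k := ⟨i + n * j - 2 * l, by linear_combination -h1⟩
  have hdvd : (n : ℤ) ∣ |i * l - j * k| :=
    (dvd_abs _ _).mpr (dvd_sub (dvd_mul_of_dvd_right hl i) (dvd_mul_of_dvd_right hk j))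
  rw [hdet] at hdvd
  exact_mod_cast Int.eq_one_of_dvd_one (Int.natCast_nonneg n) hdvd

/-- For `α` a non-quadratic irrational and `β = (2α+1)/(α+1)`: although `α` and `β`
are `PGL₂(ℤ)`-equivalent, for every `n ≥ 2` the numbers `α/n` and `β/n` are not
`PGL₂(ℤ)`-equivalent. -/
theorem stmt_10 (α β : ℝ) (hα : Irrational α)
    (hnq : LinearIndependent ℚ ![(1 : ℝ), α, α ^ 2])
    (hβ : β = (2 * α + 1) / (α + 1))
    (n : ℕ) (hn : 2 ≤ n) :
    PGL2ZEquiv α β ∧ ¬ PGL2ZEquiv (α / (n : ℝ)) (β / (n : ℝ)) := by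
  subst hβ
  refine ⟨pgl2ZEquiv_two_mul_add_one_div_add_one α, fun h ↦ ?_⟩
  have := eq_one_of_pgl2ZEquiv_div_natCast hα hnq (by omega) h
  omega
end

section
/- The numbers √2 and 3 − √2 are PGL₂(ℤ)-equivalent (indeed (2·√2 + 1)/(√2 + 1) = 3 − √2), but √2/2 and (3 − √2)/2 are not PGL₂(ℤ)-equivalent: there do not exist integers i, j, k, l with |i·l − j·k| = 1 and (i·(√2/2) + j)/(k·(√2/2) + l) = (3 − √2)/2. -/
open Real

lemma Int.eq_zero_of_add_mul_sqrt_two_eq_zero {a b : ℤ} (h : (a : ℝ) + b * √2 = 0) :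
    a = 0 ∧ b = 0 := by
  have hb : b = 0 := by
    by_contra hb
    exact (irrational_sqrt_two.intCast_mul hb).ne_int (-a) (by push_cast; linarith)
  subst hb
  simpa using h

lemma two_mul_sqrt_two_add_one_div_sqrt_two_add_one :
    (2 * √2 + 1) / (√2 + 1) = 3 - √2 := by
  have hsq : √2 ^ 2 = 2 := sq_sqrt zero_le_two
  rw [div_eq_iff (by positivity)]
  linear_combination hsq

lemma coeff_relations_of_moebius_eq {i j k l : ℤ}
    (h : ((i : ℝ) * (√2 / 2) + j) / (k * (√2 / 2) + l) = (3 - √2) / 2) :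
    2 * i + 2 * l = 3 * k ∧ 2 * j + k = 3 * l := by
  have hsq : √2 ^ 2 = 2 := sq_sqrt zero_le_two
  have hden : (k : ℝ) * (√2 / 2) + l ≠ 0 := by
    intro h0
    rw [h0, div_zero] at h
    have h3 : √2 = 3 := by linarith
    norm_num [h3] at hsq
  rw [div_eq_iff hden] at h
  have hsplit : ((4 * j + 2 * k - 6 * l : ℤ) : ℝ) + (2 * i + 2 * l - 3 * k : ℤ) * √2 = 0 := by
    push_cast
    linear_combination 4 * h - (k : ℝ) * hsq
  obtain ⟨h₁, h₂⟩ := Int.eq_zero_of_add_mul_sqrt_two_eq_zero hsplit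
  omega

lemma not_pGL2ZEquiv_sqrt_two_div_two :
    ¬ PGL2ZEquiv (√2 / 2) ((3 - √2) / 2) := by
  rintro ⟨i, j, k, l, hdet, h⟩
  obtain ⟨hk, hl⟩ := coeff_relations_of_moebius_eq h
  have heven : 2 ∣ i * l - j * k :=
    dvd_sub (dvd_mul_of_dvd_right (by omega) i) (dvd_mul_of_dvd_right (by omega) j)
  rcases abs_eq zero_le_one |>.mp hdet with hone | hneg <;> omega

/-- `√2` and `3 - √2` are `PGL₂(ℤ)`-equivalent (indeed `(2√2+1)/(√2+1) = 3-√2`),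
but `√2/2` and `(3-√2)/2` are not `PGL₂(ℤ)`-equivalent. -/
theorem stmt_11 :
    (2 * Real.sqrt 2 + 1) / (Real.sqrt 2 + 1) = 3 - Real.sqrt 2 ∧
    PGL2ZEquiv (Real.sqrt 2) (3 - Real.sqrt 2) ∧
    ¬ PGL2ZEquiv (Real.sqrt 2 / 2) ((3 - Real.sqrt 2) / 2) := by
  have hmoebius := two_mul_sqrt_two_add_one_div_sqrt_two_add_one
  refine ⟨hmoebius, ⟨2, 1, 1, 1, by norm_num, by push_cast; simpa using hmoebius⟩,
    not_pGL2ZEquiv_sqrt_two_div_two⟩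
end

section
/- Let α = (1 + √5)/4 and β = (√5 − 1)/4. Then α and β are PGL₂(ℤ)-equivalent, but 9·α and 9·β are not PGL₂(ℤ)-equivalent: there do not exist integers i, j, k, l with |i·l − j·k| = 1 and (i·(9·α) + j)/(k·(9·α) + l) = 9·β. -/
/-- Linear independence of `1` and `√5` over the integers. -/
lemma sqrt5_lin_indep (a b : ℤ) (h : (a : ℝ) * Real.sqrt 5 + (b : ℝ) = 0) :
    a = 0 ∧ b = 0 := by
  have hirr : Irrational (Real.sqrt 5) := by
    have : Nat.Prime 5 := by norm_num
    simpa using this.irrational_sqrt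
  by_cases ha : a = 0
  · subst ha
    simp only [Int.cast_zero, zero_mul, zero_add] at h
    exact ⟨rfl, by exact_mod_cast h⟩
  · exfalso
    apply hirr
    refine ⟨(-b : ℚ) / (a : ℚ), ?_⟩
    have ha' : (a : ℝ) ≠ 0 := Int.cast_ne_zero.mpr ha
    push_cast
    field_simp
    linarith

/-- The Pell-type equation `u² - 405 m² = ±4` has no solution with `m` odd. -/
lemma no_pell : ∀ n : ℕ, ∀ m u : ℤ, m.natAbs = n → Odd m →
    ¬ (u ^ 2 - 405 * m ^ 2 = 4 ∨ u ^ 2 - 405 * m ^ 2 = -4) := by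
  intro n
  induction n using Nat.strong_induction_on with
  | _ n ih =>
    intro m u hn hm heq
    set M : ℤ := (m.natAbs : ℤ) with hM
    set U : ℤ := (u.natAbs : ℤ) with hU
    have hM2 : M ^ 2 = m ^ 2 := by
      simp only [hM, sq]
      exact_mod_cast Int.natAbs_mul_self
    have hU2 : U ^ 2 = u ^ 2 := by
      simp only [hU, sq]
      exact_mod_cast Int.natAbs_mul_self
    have hModd : Odd M := by
      rw [Int.odd_iff] at hm ⊢
      omega
    have hM1 : 1 ≤ M := by
      rw [Int.odd_iff] at hModd
      omega
    have hU0 : 0 ≤ U := by positivity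
    have hEq : U ^ 2 - 405 * M ^ 2 = 4 ∨ U ^ 2 - 405 * M ^ 2 = -4 := by
      rw [hM2, hU2]; exact heq
    have hb : 405 * M ^ 2 - 4 ≤ U ^ 2 ∧ U ^ 2 ≤ 405 * M ^ 2 + 4 := by
      rcases hEq with h | h <;> constructor <;> linarith
    have h1 : 20 * M < U := by
      by_contra hc
      push_neg at hc
      have h400 : U ^ 2 ≤ 400 * M ^ 2 := by nlinarith
      nlinarith [hb.1, sq_nonneg (M - 1)]
    have h2 : 4 * U < 81 * M := by
      by_contra hc
      push_neg at hc
      have h6561 : 6561 * M ^ 2 ≤ 16 * U ^ 2 := by nlinarith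
      nlinarith [hb.2, sq_nonneg (M - 1)]
    have hlt1 : 161 * M - 8 * U < M := by linarith
    have hlt2 : -M < 161 * M - 8 * U := by linarith
    refine ih (161 * M - 8 * U).natAbs ?_ (161 * M - 8 * U) (161 * U - 3240 * M)
      rfl ?_ ?_
    · omega
    · rw [Int.odd_iff] at hModd ⊢
      omega
    · rcases hEq with h | h
      · left; linear_combination h
      · right; linear_combination h

/-- For `α = (1+√5)/4` and `β = (√5-1)/4`: `α` and `β` are `PGL₂(ℤ)`-equivalent,
but `9α` and `9β` are not. -/
theorem stmt_13 :
    PGL2ZEquiv ((1 + Real.sqrt 5) / 4) ((Real.sqrt 5 - 1) / 4) ∧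
    ¬ PGL2ZEquiv (9 * ((1 + Real.sqrt 5) / 4)) (9 * ((Real.sqrt 5 - 1) / 4)) := by
  have hs5 : Real.sqrt 5 ^ 2 = 5 := Real.sq_sqrt (by norm_num)
  have hs5gt : (2 : ℝ) < Real.sqrt 5 := by
    nlinarith [Real.sqrt_nonneg 5, hs5]
  constructor
  · refine ⟨1, -1, -2, 1, by norm_num, ?_⟩
    have hden : ((-2 : ℤ) : ℝ) * ((1 + Real.sqrt 5) / 4) + ((1 : ℤ) : ℝ) ≠ 0 := by
      push_cast
      nlinarith
    rw [div_eq_iff hden]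
    push_cast
    linear_combination hs5 / 8
  · rintro ⟨i, j, k, l, hdet, heq⟩
    have hden : (k : ℝ) * (9 * ((1 + Real.sqrt 5) / 4)) + (l : ℝ) ≠ 0 := by
      intro h0
      obtain ⟨hk, hl⟩ := sqrt5_lin_indep (9 * k) (9 * k + 4 * l)
        (by push_cast; linear_combination 4 * h0)
      have hk0 : k = 0 := by omega
      have hl0 : l = 0 := by omega
      rw [hk0, hl0] at hdet
      simp at hdet
    have h' := (div_eq_iff hden).mp heq
    obtain ⟨h1, h2⟩ := sqrt5_lin_indep (9 * i - 9 * l) (9 * i + 4 * j - 81 * k + 9 * l)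
      (by push_cast; linear_combination 4 * h' + (81 * (k : ℝ) / 4) * hs5)
    have hil : i = l := by omega
    subst hil
    have hjk2 : 4 * j = 81 * k - 18 * i := by omega
    obtain ⟨m, rfl⟩ : ∃ m, k = 2 * m := ⟨k / 2, by omega⟩
    have hjk3 : 2 * j = 81 * m - 9 * i := by omega
    have hd : i ^ 2 + 9 * i * m - 81 * m ^ 2 = 1 ∨
        i ^ 2 + 9 * i * m - 81 * m ^ 2 = -1 := by
      rcases (abs_eq (by norm_num : (0:ℤ) ≤ 1)).mp hdet with h | h
      · left; linear_combination h + m * hjk3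
      · right; linear_combination h + m * hjk3
    rcases Int.even_or_odd i with hie | hio
    · obtain ⟨a, rfl⟩ := hie
      obtain ⟨b, rfl⟩ : ∃ b, m = 2 * b := ⟨m / 2, by omega⟩
      have hring : (a + a) ^ 2 + 9 * (a + a) * (2 * b) - 81 * (2 * b) ^ 2 =
          4 * (a ^ 2 + 9 * a * b - 81 * b ^ 2) := by ring
      rcases hd with h | h <;> rw [hring] at h <;> omega
    · have hmo : Odd m := by
        rw [Int.odd_iff] at hio ⊢
        omega
      refine no_pell m.natAbs m (2 * i + 9 * m) rfl hmo ?_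
      rcases hd with h | h
      · left; linear_combination 4 * h
      · right; linear_combination 4 * h
end

section
/- Let A, B, C be additive abelian groups, let p : B → A and I : A → C be additive group homomorphisms with ker I ⊆ range p, and let τ : A → ℝ be an additive group homomorphism. Suppose N is a subgroup of A contained in ker τ such that I(A)/I(N) is torsion, i.e. for every a ∈ A there exist a positive integer r and g ∈ N with r·I(a) = I(g). Then the ℚ-subspaces of ℝ spanned by the range of τ and by the range of τ∘p coincide; equivalently, for every a ∈ A there exist a positive integer r and b ∈ B with r·τ(a) = τ(p(b)). -/
/-- Algebraic core of: an infinitesimal 2-asymptotic factor preserves the rational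
image of states. If `ker I ⊆ range p`, `N ⊆ ker τ`, and `I(A)/I(N)` is torsion,
then the `ℚ`-spans of `range τ` and `range (τ ∘ p)` coincide; equivalently every
`τ a` has a positive multiple in the range of `τ ∘ p`. -/
theorem stmt_14 {A B C : Type*} [AddCommGroup A] [AddCommGroup B] [AddCommGroup C]
    (p : B →+ A) (I : A →+ C) (τ : A →+ ℝ)
    (hker : ∀ a : A, I a = 0 → ∃ b : B, p b = a)
    (N : AddSubgroup A) (hN : ∀ g ∈ N, τ g = 0)
    (htor : ∀ a : A, ∃ r : ℕ, 0 < r ∧ ∃ g ∈ N, r • I a = I g) :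
    (Submodule.span ℚ (Set.range ⇑τ) =
      Submodule.span ℚ (Set.range (⇑τ ∘ ⇑p))) ∧
    (∀ a : A, ∃ r : ℕ, 0 < r ∧ ∃ b : B, (r : ℝ) * τ a = τ (p b)) := by
  have key : ∀ a : A, ∃ r : ℕ, 0 < r ∧ ∃ b : B, (r : ℝ) * τ a = τ (p b) := by
    intro a
    obtain ⟨r, hr, g, hg, hrg⟩ := htor a
    have h0 : I (r • a - g) = 0 := by
      simp [map_sub, map_nsmul, hrg]
    obtain ⟨b, hb⟩ := hker _ h0
    refine ⟨r, hr, b, ?_⟩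
    have := congrArg τ hb
    rw [map_sub, map_nsmul, hN g hg] at this
    rw [this]; ring
  refine ⟨?_, key⟩
  apply le_antisymm
  · rw [Submodule.span_le]
    rintro _ ⟨a, rfl⟩
    obtain ⟨r, hr, b, hb⟩ := key a
    have : τ a = ((r : ℚ)⁻¹ : ℚ) • ((⇑τ ∘ ⇑p) b) := by
      have hr' : (r : ℝ) ≠ 0 := Nat.cast_ne_zero.mpr hr.ne'
      rw [Function.comp, ← hb, Rat.smul_def]
      push_cast
      field_simp
    rw [this]
    exact Submodule.smul_mem _ _ (Submodule.subset_span ⟨b, rfl⟩)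
  · apply Submodule.span_mono
    rintro _ ⟨b, rfl⟩
    exact ⟨p b, rfl⟩
end

section
/- Let A, B, C be additive abelian groups, let p : B → A and I : A → C be additive group homomorphisms with ker I = range p, let τ : A → ℝ be an additive group homomorphism, and let M be a subgroup of ℝ. Then the following are equivalent: (i) there exists a subgroup G of A such that τ(G) ⊆ M and I(A)/I(G) is torsion (for every a ∈ A there exist a positive integer r and g ∈ G with r·I(a) = I(g)); (ii) the ℚ-subspaces of ℝ spanned by (range of τ) + M and by (range of τ∘p) + M coincide. -/
/-!
For an additive subgroup `H` of a `ℚ`-vector space, `x` lies in the `ℚ`-span of `H` iff some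
positive multiple of `x` lies in `H`. Hence (ii) says that every `τ a` has a positive multiple
`n • τ a ∈ τ(p(B)) + M`, i.e. `τ (n • a - p b) ∈ M` for some `b`. Since `ker I = range p`, this is
exactly what (i) asks, with `G = τ⁻¹(M)`.
-/

namespace AddSubgroup

variable {V : Type*} [AddCommGroup V] [Module ℚ V]

theorem mem_span_rat_iff_exists_nsmul_mem (H : AddSubgroup V) (x : V) :
    x ∈ Submodule.span ℚ (H : Set V) ↔ ∃ n : ℕ, 0 < n ∧ n • x ∈ H := by
  constructor
  · intro hx
    induction hx using Submodule.span_induction with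
    | mem x hx => exact ⟨1, one_pos, by simpa using hx⟩
    | zero => exact ⟨1, one_pos, by simp⟩
    | add x y _ _ hx hy =>
      obtain ⟨m, hm, hmx⟩ := hx
      obtain ⟨n, hn, hny⟩ := hy
      refine ⟨m * n, Nat.mul_pos hm hn, ?_⟩
      rw [smul_add, mul_comm m n, mul_smul, mul_comm n m, mul_smul]
      exact H.add_mem (H.nsmul_mem hmx n) (H.nsmul_mem hny m)
    | smul q x _ hx =>
      obtain ⟨n, hn, hnx⟩ := hx
      refine ⟨q.den * n, Nat.mul_pos q.pos hn, ?_⟩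
      have : (q.den * n) • q • x = q.num • n • x := by
        rw [← Nat.cast_smul_eq_nsmul ℚ, ← Nat.cast_smul_eq_nsmul ℚ n, ← Int.cast_smul_eq_zsmul ℚ,
          smul_smul, smul_smul, ← Rat.mul_den_eq_num]
        push_cast
        ring_nf
      rw [this]
      exact H.zsmul_mem hnx q.num
  · rintro ⟨n, hn, hnx⟩
    have hx : x = (n : ℚ)⁻¹ • n • x := by
      rw [← Nat.cast_smul_eq_nsmul ℚ, inv_smul_smul₀ (Nat.cast_ne_zero.mpr hn.ne')]
    rw [hx]
    exact Submodule.smul_mem _ _ (Submodule.subset_span hnx)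

theorem span_rat_union (H K : AddSubgroup V) :
    Submodule.span ℚ ((H : Set V) ∪ K) = Submodule.span ℚ ((H ⊔ K : AddSubgroup V) : Set V) := by
  rw [← Submodule.span_span_of_tower ℤ ℚ ((H : Set V) ∪ K), ← Submodule.coe_toAddSubgroup,
    Submodule.span_int_eq_addSubgroupClosure, closure_union, closure_eq, closure_eq]

end AddSubgroup

section

variable {A V : Type*} [AddCommGroup A] [AddCommGroup V] [Module ℚ V]

theorem AddMonoidHom.mem_span_rat_range_union_iff (f : A →+ V) (M : AddSubgroup V) (x : V) :
    x ∈ Submodule.span ℚ (Set.range f ∪ M) ↔ ∃ n : ℕ, 0 < n ∧ ∃ a, n • x - f a ∈ M := by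
  rw [← f.coe_range, AddSubgroup.span_rat_union, AddSubgroup.mem_span_rat_iff_exists_nsmul_mem]
  refine exists_congr fun n => and_congr_right fun _ => ?_
  rw [AddSubgroup.mem_sup]
  constructor
  · rintro ⟨_, ⟨a, rfl⟩, m, hm, hsum⟩
    exact ⟨a, by rwa [← hsum, add_sub_cancel_left]⟩
  · rintro ⟨a, ha⟩
    exact ⟨f a, ⟨a, rfl⟩, _, ha, add_sub_cancel _ _⟩

end

theorem exists_addSubgroup_map_le_and_torsion_iff {A B C V : Type*} [AddCommGroup A]
    [AddCommGroup B] [AddCommGroup C] [AddCommGroup V] {p : B →+ A} {I : A →+ C} (τ : A →+ V)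
    (hker : ∀ a : A, I a = 0 ↔ ∃ b : B, p b = a) (M : AddSubgroup V) :
    (∃ G : AddSubgroup A, (∀ g ∈ G, τ g ∈ M) ∧
        ∀ a : A, ∃ r : ℕ, 0 < r ∧ ∃ g ∈ G, r • I a = I g) ↔
      ∀ a : A, ∃ n : ℕ, 0 < n ∧ ∃ b : B, n • τ a - τ (p b) ∈ M := by
  constructor
  · rintro ⟨G, hGM, hG⟩ a
    obtain ⟨r, hr, g, hg, hrg⟩ := hG a
    obtain ⟨b, hb⟩ := (hker (r • a - g)).mp (by rw [map_sub, map_nsmul, hrg, sub_self])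
    refine ⟨r, hr, b, ?_⟩
    rw [← map_nsmul, ← map_sub, hb, sub_sub_cancel]
    exact hGM g hg
  · intro h
    refine ⟨M.comap τ, fun g hg => hg, fun a => ?_⟩
    obtain ⟨n, hn, b, hb⟩ := h a
    refine ⟨n, hn, n • a - p b, by simpa using hb, ?_⟩
    rw [map_sub, map_nsmul, (hker (p b)).mpr ⟨b, rfl⟩, sub_zero]

/-- Algebraic core of the characterization of `M`-measured 2-asymptotic factors:
with `ker I = range p`, the state `τ` is `M`-measured (there is a subgroup
`G ⊆ τ⁻¹(M)` with `I(A)/I(G)` torsion) iff the `ℚ`-spans of `range τ + M` and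
`range (τ ∘ p) + M` coincide. -/
theorem stmt_16 {A B C : Type*} [AddCommGroup A] [AddCommGroup B] [AddCommGroup C]
    (p : B →+ A) (I : A →+ C) (τ : A →+ ℝ)
    (hker : ∀ a : A, I a = 0 ↔ ∃ b : B, p b = a)
    (M : AddSubgroup ℝ) :
    (∃ G : AddSubgroup A, (∀ g ∈ G, τ g ∈ M) ∧
        ∀ a : A, ∃ r : ℕ, 0 < r ∧ ∃ g ∈ G, r • I a = I g) ↔
    (Submodule.span ℚ (Set.range ⇑τ ∪ (M : Set ℝ)) =
      Submodule.span ℚ (Set.range (⇑τ ∘ ⇑p) ∪ (M : Set ℝ))) := by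
  have hle : Submodule.span ℚ (Set.range (⇑τ ∘ ⇑p) ∪ (M : Set ℝ)) ≤
      Submodule.span ℚ (Set.range ⇑τ ∪ (M : Set ℝ)) :=
    Submodule.span_mono (Set.union_subset_union_left _ (Set.range_comp_subset_range p τ))
  rw [exists_addSubgroup_map_le_and_torsion_iff τ hker, le_antisymm_iff, and_iff_left hle,
    Submodule.span_le, Set.union_subset_iff, and_iff_left (Set.subset_union_right.trans
      Submodule.subset_span), Set.range_subset_iff]
  exact forall_congr' fun a => ((τ.comp p).mem_span_rat_range_union_iff M (τ a)).symm
end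

section
/- Let α be a non-quadratic irrational real number and let β = (2·α + 1)/(α + 1). Then α and β are PGL₂(ℤ)-equivalent, but there is no integer k and no ε ∈ {1, −1} with α = ε·β + k. Consequently there exist irrational real numbers that are PGL₂(ℤ)-equivalent but not eventually PGL₂(ℤ)-equivalent. -/
theorem Irrational.eq_zero_of_intCast_mul_add_eq_zero {x : ℝ} (hx : Irrational x) {a b : ℤ}
    (h : a * x + b = 0) : a = 0 ∧ b = 0 := by
  by_cases ha : a = 0
  · subst ha
    simpa using h
  · exact absurd h ((hx.intCast_mul ha).add_intCast b).ne_zero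

theorem LinearIndependent.smul_one_add_smul_add_sq_ne_zero {K A : Type*} [Field K] [Ring A]
    [Algebra K A] {x : A} (h : LinearIndependent K ![1, x, x ^ 2]) (a b : K) :
    a • 1 + b • x + x ^ 2 ≠ 0 := by
  intro hx
  have := Fintype.linearIndependent_iff.mp h ![a, b, 1] (by simpa [Fin.sum_univ_three] using hx) 2
  simp at this

theorem not_pgl2ZEquiv_two_mul_sqrt_two (c : ℤ) (hc : c ≠ 0) :
    ¬ PGL2ZEquiv (2 * c * √2) (c * √2) := by
  rintro ⟨i, j, k, l, hdet, heq⟩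
  have hsq : √2 ^ 2 = 2 := Real.sq_sqrt zero_le_two
  have hden : (k : ℝ) * (2 * c * √2) + l ≠ 0 := by
    intro h0
    obtain ⟨hk, rfl⟩ := irrational_sqrt_two.eq_zero_of_intCast_mul_add_eq_zero
      (a := k * 2 * c) (b := l) (by push_cast; linear_combination h0)
    obtain rfl : k = 0 := by simpa [hc] using hk
    simp at hdet
  rw [div_eq_iff hden] at heq
  obtain ⟨hl, hj⟩ := irrational_sqrt_two.eq_zero_of_intCast_mul_add_eq_zero
    (a := 2 * c * i - c * l) (b := j - 4 * c ^ 2 * k)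
    (by push_cast; linear_combination heq + 2 * c ^ 2 * k * hsq)
  obtain rfl : l = 2 * i := by
    have : c * (2 * i - l) = 0 := by linear_combination hl
    linarith [(mul_eq_zero.mp this).resolve_left hc]
  obtain rfl : j = 4 * c ^ 2 * k := by linarith
  have : i * (2 * i) - 4 * c ^ 2 * k * k = 2 * (i ^ 2 - 2 * c ^ 2 * k ^ 2) := by ring
  rw [this] at hdet
  rcases abs_eq zero_le_one |>.mp hdet with h | h <;> omega

/-- For `α` a non-quadratic irrational and `β = (2α+1)/(α+1)`: `α` and `β` are
`PGL₂(ℤ)`-equivalent but `α ≠ ±β + k` for every integer `k`; consequently there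
exist irrationals that are `PGL₂(ℤ)`-equivalent but not eventually
`PGL₂(ℤ)`-equivalent. -/
theorem stmt_18 (α β : ℝ) (hα : Irrational α)
    (hnq : LinearIndependent ℚ ![(1 : ℝ), α, α ^ 2])
    (hβ : β = (2 * α + 1) / (α + 1)) :
    PGL2ZEquiv α β ∧
    (¬ ∃ (ε : ℝ) (k : ℤ), (ε = 1 ∨ ε = -1) ∧ α = ε * β + (k : ℝ)) ∧
    (∃ x y : ℝ, Irrational x ∧ Irrational y ∧ PGL2ZEquiv x y ∧
      ¬ ∃ m : ℕ, ∀ n : ℕ, m ≤ n → 1 ≤ n →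
        PGL2ZEquiv ((n : ℝ) * x) ((n : ℝ) * y)) := by
  refine ⟨⟨2, 1, 1, 1, by norm_num, by simp [hβ]⟩, ?_, ?_⟩
  · rintro ⟨ε, k, hε, hrel⟩
    obtain ⟨e, rfl⟩ : ∃ e : ℤ, ε = e := by
      rcases hε with rfl | rfl
      exacts [⟨1, by simp⟩, ⟨-1, by simp⟩]
    have hden : α + 1 ≠ 0 := by simpa using (hα.add_intCast 1).ne_zero
    rw [hβ, ← sub_eq_iff_eq_add, mul_div_assoc', eq_div_iff hden] at hrel
    apply hnq.smul_one_add_smul_add_sq_ne_zero (-k - e : ℚ) (1 - k - 2 * e : ℚ)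
    simp only [Rat.smul_def]
    push_cast
    linear_combination hrel
  · refine ⟨√2, (√2)⁻¹, irrational_sqrt_two, irrational_sqrt_two.inv,
      ⟨0, 1, 1, 0, by norm_num, by simp⟩, ?_⟩
    rintro ⟨m, hm⟩
    have hn : ((2 * (m + 1) : ℕ) : ℝ) * (√2)⁻¹ = ((m + 1 : ℤ) : ℝ) * √2 := by
      push_cast
      rw [mul_comm 2, mul_assoc, ← div_eq_mul_inv, Real.div_sqrt]
    refine not_pgl2ZEquiv_two_mul_sqrt_two (m + 1) (by omega) ?_
    have h := hm (2 * (m + 1)) (by omega) (by omega)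
    rw [hn] at h
    convert h using 1
    push_cast
    ring
end
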